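/- Let f_1,...,f_k be smooth functions of x with all Wronskians W_j = W[f_1,...,f_j] nonvanishing, and define the first-order operators T_j = (W_j/W_{j-1}) ∘ D ∘ (W_{j-1}/W_j) (with W_0 = 1). Then for any smooth f, the composition satisfies T_k ∘ ⋯ ∘ T_1 (f) = W_k(f)/W_k, where W_k(f) = W[f_1,...,f_k,f]. -/

import Mathlib

open Matrix

theorem hasDerivAt_det {n : ℕ} {M : ℝ → Matrix (Fin n) (Fin n) ℝ}
    {M' : Matrix (Fin n) (Fin n) ℝ} {x : ℝ}
    (h : ∀ i j, HasDerivAt (fun y => M y i j) (M' i j) x) :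
    HasDerivAt (fun y => (M y).det)
      (∑ c : Fin n, ((M x).updateCol c (fun i => M' i c)).det) x := by
  have hprod : ∀ σ : Equiv.Perm (Fin n),
      HasDerivAt (fun y => ∏ i, M y (σ i) i)
        (∑ c : Fin n, (∏ j ∈ Finset.univ.erase c, M x (σ j) j) * M' (σ c) c) x := by
    intro σ
    have := HasDerivAt.fun_finsetProd (u := Finset.univ)
      (f := fun i y => M y (σ i) i) (f' := fun i => M' (σ i) i)
      (fun i _ => h (σ i) i)
    simpa [smul_eq_mul] using this
  have hsum : HasDerivAt (fun y => ∑ σ : Equiv.Perm (Fin n),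
      ((Equiv.Perm.sign σ : ℤ) : ℝ) * ∏ i, M y (σ i) i)
      (∑ σ : Equiv.Perm (Fin n), ((Equiv.Perm.sign σ : ℤ) : ℝ) *
        ∑ c : Fin n, (∏ j ∈ Finset.univ.erase c, M x (σ j) j) * M' (σ c) c) x :=
    HasDerivAt.fun_sum (fun σ _ => (hprod σ).const_mul _)
  have e1 : (fun y => (M y).det) = fun y => ∑ σ : Equiv.Perm (Fin n),
      ((Equiv.Perm.sign σ : ℤ) : ℝ) * ∏ i, M y (σ i) i := by
    funext y; rw [Matrix.det_apply]
    congr 1; funext σ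
    rw [Units.smul_def, zsmul_eq_mul]
  rw [e1]
  convert hsum using 1
  simp_rw [Finset.mul_sum]
  rw [Finset.sum_comm]
  congr 1
  funext c
  rw [Matrix.det_apply]
  congr 1
  funext σ
  rw [Units.smul_def, zsmul_eq_mul]
  congr 1
  have hmem : c ∈ (Finset.univ : Finset (Fin n)) := Finset.mem_univ c
  rw [← Finset.mul_prod_erase _ _ hmem]
  have h1 : ((M x).updateCol c fun i => M' i c) (σ c) c = M' (σ c) c := by
    simp [Matrix.updateCol_apply]
  have h2 : ∏ j ∈ Finset.univ.erase c, ((M x).updateCol c fun i => M' i c) (σ j) j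
      = ∏ j ∈ Finset.univ.erase c, M x (σ j) j := by
    apply Finset.prod_congr rfl
    intro j hj
    rw [Matrix.updateCol_apply, if_neg (Finset.ne_of_mem_erase hj)]
  rw [h1, h2]
  ring


theorem hasDerivAt_entry {f : ℝ → ℝ} (hf : ContDiff ℝ (⊤ : ℕ∞) f) (m : ℕ) (x : ℝ) :
    HasDerivAt (iteratedDeriv m f) (iteratedDeriv (m + 1) f x) x := by
  have hd : DifferentiableAt ℝ (iteratedDeriv m f) x := by
    refine (hf.differentiable_iteratedDeriv m ?_).differentiableAt
    exact_mod_cast lt_of_lt_of_le (WithTop.coe_lt_top _) le_rfl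
  have := hd.hasDerivAt
  rwa [show deriv (iteratedDeriv m f) x = iteratedDeriv (m + 1) f x by
    rw [iteratedDeriv_succ]] at this

theorem hasDerivAt_wdet {n : ℕ} (r : Fin n → ℕ) (F : Fin n → ℝ → ℝ)
    (hF : ∀ j, ContDiff ℝ (⊤ : ℕ∞) (F j)) (x : ℝ) :
    HasDerivAt (fun y => (Matrix.of fun i j : Fin n => iteratedDeriv (r i) (F j) y).det)
      (∑ c : Fin n, (Matrix.of fun i j : Fin n =>
        iteratedDeriv (if i = c then r i + 1 else r i) (F j) x).det) x := by
  have e1 : (fun y => (Matrix.of fun i j : Fin n => iteratedDeriv (r i) (F j) y).det)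
      = fun y => (Matrix.of fun i j : Fin n => iteratedDeriv (r j) (F i) y).det := by
    funext y
    rw [← Matrix.det_transpose]
    rfl
  rw [e1]
  have h := hasDerivAt_det (M := fun y => Matrix.of fun i j : Fin n => iteratedDeriv (r j) (F i) y)
    (M' := Matrix.of fun i j : Fin n => iteratedDeriv (r j + 1) (F i) x) (x := x)
    (fun i j => hasDerivAt_entry (hF i) (r j) x)
  convert h using 1
  congr 1
  funext c
  rw [← Matrix.det_transpose]
  congr 1
  ext i j
  simp only [Matrix.transpose_apply, Matrix.updateCol_apply, Matrix.of_apply]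
  by_cases hjc : j = c <;> simp [hjc]

theorem hasDerivAt_wronskian_row {m : ℕ} (F : Fin (m+1) → ℝ → ℝ)
    (hF : ∀ j, ContDiff ℝ (⊤ : ℕ∞) (F j)) (x : ℝ) :
    HasDerivAt (fun y => (Matrix.of fun i j : Fin (m+1) => iteratedDeriv (i : ℕ) (F j) y).det)
      ((Matrix.of fun i j : Fin (m+1) =>
        iteratedDeriv (if i = Fin.last m then m + 1 else (i : ℕ)) (F j) x).det) x := by
  have h := hasDerivAt_wdet (fun i : Fin (m+1) => (i : ℕ)) F hF x
  convert h using 1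
  rw [Finset.sum_eq_single_of_mem (Fin.last m) (Finset.mem_univ _)]
  · congr 1
    ext i j
    by_cases hi : i = Fin.last m <;> simp [hi, Fin.val_last]
  · intro c _ hc
    have hlt : (c : ℕ) < m := by
      have := c.isLt
      rcases Nat.lt_or_ge (c : ℕ) m with h' | h'
      · exact h'
      · exfalso; apply hc; ext; simp only [Fin.val_last]; omega
    apply Matrix.det_zero_of_row_eq (i := c) (j := ⟨(c : ℕ) + 1, by omega⟩)
    · intro hcc
      have := congrArg Fin.val hcc
      simp at this
    · funext j
      have h1 : ((⟨(c : ℕ) + 1, by omega⟩ : Fin (m+1)) = c) = False := by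
        simp [Fin.ext_iff]
      simp only [Matrix.of_apply, if_pos rfl, h1, if_false]
      simp


/-- Desnanot–Jacobi via Schur complements. -/
theorem dodgson {k : ℕ} (A : Matrix (Fin k) (Fin k) ℝ) (B : Matrix (Fin k) (Fin 2) ℝ)
    (C : Matrix (Fin 2) (Fin k) ℝ) (D : Matrix (Fin 2) (Fin 2) ℝ) (hA : IsUnit A.det) :
    (Matrix.fromBlocks A B C D).det * A.det =
      (Matrix.fromBlocks A (Matrix.of fun i (_ : Fin 1) => B i 0)
        (Matrix.of fun (_ : Fin 1) j => C 0 j) (Matrix.of fun _ _ => D 0 0)).det *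
      (Matrix.fromBlocks A (Matrix.of fun i (_ : Fin 1) => B i 1)
        (Matrix.of fun (_ : Fin 1) j => C 1 j) (Matrix.of fun _ _ => D 1 1)).det -
      (Matrix.fromBlocks A (Matrix.of fun i (_ : Fin 1) => B i 0)
        (Matrix.of fun (_ : Fin 1) j => C 1 j) (Matrix.of fun _ _ => D 1 0)).det *
      (Matrix.fromBlocks A (Matrix.of fun i (_ : Fin 1) => B i 1)
        (Matrix.of fun (_ : Fin 1) j => C 0 j) (Matrix.of fun _ _ => D 0 1)).det := by
  haveI := A.invertibleOfIsUnitDet hA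
  have key : ∀ t s : Fin 2,
      (Matrix.fromBlocks A (Matrix.of fun i (_ : Fin 1) => B i s)
        (Matrix.of fun (_ : Fin 1) j => C t j) (Matrix.of fun _ _ => D t s)).det
      = A.det * (D - C * ⅟A * B) t s := by
    intro t s
    rw [Matrix.det_fromBlocks₁₁]
    congr 1
    rw [Matrix.det_fin_one]
    simp [Matrix.mul_apply, Matrix.sub_apply]
  rw [Matrix.det_fromBlocks₁₁, Matrix.det_fin_two, key, key, key, key]
  ring

theorem det_split1 {k : ℕ} (a : ℕ → ℕ → ℝ) (r c : Fin (k+1) → ℕ) :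
    (Matrix.of fun i j : Fin (k+1) => a (r i) (c j)).det =
    (Matrix.fromBlocks
      (Matrix.of fun i j : Fin k => a (r i.castSucc) (c j.castSucc))
      (Matrix.of fun i (_ : Fin 1) => a (r i.castSucc) (c (Fin.last k)))
      (Matrix.of fun (_ : Fin 1) j => a (r (Fin.last k)) (c j.castSucc))
      (Matrix.of fun (_ : Fin 1) (_ : Fin 1) => a (r (Fin.last k)) (c (Fin.last k)))).det := by
  rw [← Matrix.det_submatrix_equiv_self finSumFinEquiv
    (Matrix.of fun i j : Fin (k+1) => a (r i) (c j))]
  congr 1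
  ext i j
  have hlast : finSumFinEquiv (Sum.inr (0 : Fin 1)) = Fin.last k := by
    ext; simp
  have hcast : ∀ i : Fin k, finSumFinEquiv (Sum.inl i) = (i.castSucc : Fin (k+1)) := by
    intro i; ext; simp
  rcases i with i | i <;> rcases j with j | j
  · simp [Matrix.fromBlocks, hlast, hcast]
  · simp [Matrix.fromBlocks, Fin.fin_one_eq_zero j, hlast, hcast]
  · simp [Matrix.fromBlocks, Fin.fin_one_eq_zero i, hlast, hcast]
  · simp [Matrix.fromBlocks, Fin.fin_one_eq_zero i, Fin.fin_one_eq_zero j, hlast, hcast]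

theorem det_split2 {k : ℕ} (a : ℕ → ℕ → ℝ) :
    (Matrix.of fun i j : Fin (k+2) => a i j).det =
    (Matrix.fromBlocks
      (Matrix.of fun i j : Fin k => a i j)
      (Matrix.of fun (i : Fin k) (t : Fin 2) => a i (k + t))
      (Matrix.of fun (t : Fin 2) (j : Fin k) => a (k + t) j)
      (Matrix.of fun (t s : Fin 2) => a (k + t) (k + s))).det := by
  rw [← Matrix.det_submatrix_equiv_self finSumFinEquiv
    (Matrix.of fun i j : Fin (k+2) => a i j)]
  congr 1
  ext i j
  rcases i with i | i <;> rcases j with j | j <;>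
    simp [Matrix.fromBlocks]

def jrow (k : ℕ) (i : Fin (k+1)) : ℕ := if i = Fin.last k then k + 1 else (i : ℕ)

@[simp] theorem jrow_castSucc {k : ℕ} (i : Fin k) : jrow k i.castSucc = (i : ℕ) := by
  have h : ¬ (i.castSucc = Fin.last k) := by
    intro h
    have := congrArg Fin.val h
    simp only [Fin.coe_castSucc, Fin.val_last] at this
    omega
  simp [jrow, h]

@[simp] theorem jrow_last {k : ℕ} : jrow k (Fin.last k) = k + 1 := by
  rw [jrow, if_pos rfl]

theorem jacobi {k : ℕ} (a : ℕ → ℕ → ℝ)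
    (h0 : (Matrix.of fun i j : Fin k => a i j).det ≠ 0) :
    (Matrix.of fun i j : Fin (k+2) => a i j).det *
      (Matrix.of fun i j : Fin k => a i j).det =
    (Matrix.of fun i j : Fin (k+1) => a i j).det *
      (Matrix.of fun i j : Fin (k+1) => a (jrow k i) (jrow k j)).det -
    (Matrix.of fun i j : Fin (k+1) => a (jrow k i) j).det *
      (Matrix.of fun i j : Fin (k+1) => a i (jrow k j)).det := by
  have hA : IsUnit (Matrix.of fun i j : Fin k => a i j).det := isUnit_iff_ne_zero.mpr h0
  have H := dodgson (Matrix.of fun i j : Fin k => a i j)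
    (Matrix.of fun (i : Fin k) (t : Fin 2) => a i (k + t))
    (Matrix.of fun (t : Fin 2) (j : Fin k) => a (k + t) j)
    (Matrix.of fun (t s : Fin 2) => a (k + t) (k + s)) hA
  have h2 := det_split2 (k := k) a
  have conv1 : ∀ (r c : Fin (k+1) → ℕ) (t s : Fin 2),
      (∀ i : Fin k, r i.castSucc = (i : ℕ)) → (∀ j : Fin k, c j.castSucc = (j : ℕ)) →
      r (Fin.last k) = k + (t : ℕ) → c (Fin.last k) = k + (s : ℕ) →
      (Matrix.of fun i j : Fin (k+1) => a (r i) (c j)).det =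
      (Matrix.fromBlocks (Matrix.of fun i j : Fin k => a i j)
        (Matrix.of fun i (_ : Fin 1) =>
          (Matrix.of fun (i : Fin k) (t : Fin 2) => a i (k + t)) i s)
        (Matrix.of fun (_ : Fin 1) j =>
          (Matrix.of fun (t : Fin 2) (j : Fin k) => a (k + t) j) t j)
        (Matrix.of fun _ _ =>
          (Matrix.of fun (t s : Fin 2) => a (k + t) (k + s)) t s)).det := by
    intro r c t s hr hc hrl hcl
    rw [det_split1 a r c]
    congr 1
    ext i j
    rcases i with i | i <;> rcases j with j | j <;>
      simp [Matrix.fromBlocks, hr, hc, hrl, hcl]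
  have h00 := conv1 (fun i => (i : ℕ)) (fun j => (j : ℕ)) 0 0
    (fun i => rfl) (fun j => rfl) (by simp [Fin.val_last]) (by simp [Fin.val_last])
  have h11 := conv1 (jrow k) (jrow k) 1 1 (fun i => jrow_castSucc i) (fun j => jrow_castSucc j)
    (by simp) (by simp)
  have h10 := conv1 (jrow k) (fun j => (j : ℕ)) 1 0 (fun i => jrow_castSucc i) (fun j => rfl)
    (by simp) (by simp [Fin.val_last])
  have h01 := conv1 (fun i => (i : ℕ)) (jrow k) 0 1 (fun i => rfl) (fun j => jrow_castSucc j)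
    (by simp [Fin.val_last]) (by simp)
  rw [h2, h00, h11, h10, h01]
  exact H


theorem darb_div_helper (a b c : ℝ) (ha : a ≠ 0) (hb : b ≠ 0) :
    a / b * (c / a) = c / b := by
  field_simp

theorem darb_alg (W2 W1 W0 Dg D1 Wg : ℝ) (h0 : W0 ≠ 0) (h1 : W1 ≠ 0)
    (J : W2 * W0 = W1 * Dg - D1 * Wg) :
    W1 / W0 * ((Dg * W1 - Wg * D1) / W1 ^ 2) = W2 / W1 := by
  have e : Dg * W1 - Wg * D1 = W2 * W0 := by linear_combination -J
  rw [e, div_mul_div_comm, div_eq_div_iff (mul_ne_zero h0 (pow_ne_zero 2 h1)) h1]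
  ring

/-! ### Main definitions and theorem -/

/-- The Wronskian determinant `W[F_1,…,F_n](x) = det(∂^{α−1} F_β(x))`. -/
noncomputable def wronskianDet (n : ℕ) (F : Fin n → ℝ → ℝ) (x : ℝ) : ℝ :=
  (Matrix.of fun i j : Fin n => iteratedDeriv (i : ℕ) (F j) x).det

/-- The iterated Darboux transformation `T_j ∘ ⋯ ∘ T_1`, where
`T_j = (W_j/W_{j-1}) ∘ D ∘ (W_{j-1}/W_j)` (with `W_0 = 1`) and
`W_j = W[f_1,…,f_j]`: `darbouxIter f 0 g = g` and
`darbouxIter f (j+1) g = T_{j+1} (darbouxIter f j g)`. -/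
noncomputable def darbouxIter (f : ℕ → ℝ → ℝ) : ℕ → (ℝ → ℝ) → ℝ → ℝ
  | 0, g => g
  | j + 1, g => fun x =>
      (wronskianDet (j + 1) (fun i : Fin (j + 1) => f i) x /
        wronskianDet j (fun i : Fin j => f i) x) *
      deriv (fun y =>
        (wronskianDet j (fun i : Fin j => f i) y /
          wronskianDet (j + 1) (fun i : Fin (j + 1) => f i) y) *
          darbouxIter f j g y) x

/-- **Iterated Darboux transformation formula.** Let `f_1,…,f_k` be smooth with all
Wronskians `W_j = W[f_1,…,f_j]` nonvanishing, and `T_j = (W_j/W_{j-1}) ∘ D ∘ (W_{j-1}/W_j)`.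
Then for any smooth `g`, `T_k ∘ ⋯ ∘ T_1 (g) = W_k(g)/W_k`, where `W_k(g) = W[f_1,…,f_k,g]`. -/
theorem iterated_darboux (k : ℕ) (f : ℕ → ℝ → ℝ) (g : ℝ → ℝ)
    (hf : ∀ i, ContDiff ℝ (⊤ : ℕ∞) (f i)) (hg : ContDiff ℝ (⊤ : ℕ∞) g)
    (hW : ∀ j, j ≤ k → ∀ x : ℝ, wronskianDet j (fun i : Fin j => f i) x ≠ 0) :
    ∀ x : ℝ, darbouxIter f k g x =
      wronskianDet (k + 1) (Fin.snoc (fun i : Fin k => f i) g) x /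
        wronskianDet k (fun i : Fin k => f i) x := by
  induction k with
  | zero =>
      intro x
      simp only [darbouxIter, wronskianDet]
      rw [Matrix.det_fin_zero, Matrix.det_fin_one]
      simp [Fin.snoc]
  | succ k IH =>
      intro x
      set v : ℕ → ℝ → ℝ := fun j => if j = k + 1 then g else f j with hv
      have hvs : ∀ j, ContDiff ℝ (⊤ : ℕ∞) (v j) := by
        intro j
        by_cases h : j = k + 1
        · rw [show v j = g by rw [hv]; simp [h]]
          exact hg
        · rw [show v j = f j by rw [hv]; simp [h]]
          exact hf j
      have hvf : ∀ j : ℕ, j ≤ k → v j = f j := by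
        intro j hj
        simp only [hv]
        rw [if_neg (by omega)]
      have hvg : v (k + 1) = g := by simp [hv]
      have hW0 : ∀ y, wronskianDet k (fun i : Fin k => f i) y
          = (Matrix.of fun i j : Fin k => iteratedDeriv (i : ℕ) (v j) y).det := by
        intro y; unfold wronskianDet; congr 1; ext i j
        simp only [Matrix.of_apply]
        rw [hvf (j : ℕ) (by omega)]
      have hW1 : ∀ y, wronskianDet (k+1) (fun i : Fin (k+1) => f i) y
          = (Matrix.of fun i j : Fin (k+1) => iteratedDeriv (i : ℕ) (v j) y).det := by
        intro y; unfold wronskianDet; congr 1; ext i j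
        simp only [Matrix.of_apply]
        rw [hvf (j : ℕ) (by omega)]
      have hWg : ∀ y, wronskianDet (k+1) (Fin.snoc (fun i : Fin k => f i) g) y
          = (Matrix.of fun i j : Fin (k+1) => iteratedDeriv (i : ℕ) (v (jrow k j)) y).det := by
        intro y; unfold wronskianDet; congr 1; ext i j
        simp only [Matrix.of_apply]
        congr 1
        induction j using Fin.lastCases with
        | last => rw [Fin.snoc_last, jrow_last, hvg]
        | cast p => rw [Fin.snoc_castSucc, jrow_castSucc, hvf (p : ℕ) (by omega)]
      have hW2 : ∀ y, wronskianDet (k+2) (Fin.snoc (fun i : Fin (k+1) => f i) g) y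
          = (Matrix.of fun i j : Fin (k+2) => iteratedDeriv (i : ℕ) (v j) y).det := by
        intro y; unfold wronskianDet; congr 1; ext i j
        simp only [Matrix.of_apply]
        congr 1
        induction j using Fin.lastCases with
        | last =>
            rw [Fin.snoc_last]
            rw [show ((Fin.last (k+1) : Fin (k+2)) : ℕ) = k + 1 from rfl, hvg]
        | cast p =>
            rw [Fin.snoc_castSucc, Fin.coe_castSucc, hvf (p : ℕ) (by omega)]
      have hd1 : HasDerivAt
          (fun y => (Matrix.of fun i j : Fin (k+1) => iteratedDeriv (i : ℕ) (v j) y).det)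
          ((Matrix.of fun i j : Fin (k+1) => iteratedDeriv (jrow k i) (v j) x).det) x := by
        have h := hasDerivAt_wronskian_row (fun j : Fin (k+1) => v j) (fun j => hvs j) x
        simpa only [jrow] using h
      have hdg : HasDerivAt
          (fun y => (Matrix.of fun i j : Fin (k+1) => iteratedDeriv (i : ℕ) (v (jrow k j)) y).det)
          ((Matrix.of fun i j : Fin (k+1) =>
            iteratedDeriv (jrow k i) (v (jrow k j)) x).det) x := by
        have h := hasDerivAt_wronskian_row (fun j : Fin (k+1) => v (jrow k j))
          (fun j => hvs (jrow k j)) x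
        simpa only [jrow] using h
      have hne0 : ∀ y, wronskianDet k (fun i : Fin k => f i) y ≠ 0 := hW k (by omega)
      have hne1 : ∀ y, wronskianDet (k+1) (fun i : Fin (k+1) => f i) y ≠ 0 := hW (k+1) le_rfl
      have hIH := IH (fun j hj => hW j (by omega))
      have hne0d : ∀ y, (Matrix.of fun i j : Fin k =>
          iteratedDeriv (i : ℕ) (v j) y).det ≠ 0 := by
        intro y; rw [← hW0 y]; exact hne0 y
      have hne1d : ∀ y, (Matrix.of fun i j : Fin (k+1) =>
          iteratedDeriv (i : ℕ) (v j) y).det ≠ 0 := by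
        intro y; rw [← hW1 y]; exact hne1 y
      simp only [darbouxIter]
      have hfun : (fun y => (wronskianDet k (fun i : Fin k => f i) y /
            wronskianDet (k + 1) (fun i : Fin (k + 1) => f i) y) * darbouxIter f k g y)
          = fun y =>
            (Matrix.of fun i j : Fin (k+1) => iteratedDeriv (i : ℕ) (v (jrow k j)) y).det /
            (Matrix.of fun i j : Fin (k+1) => iteratedDeriv (i : ℕ) (v j) y).det := by
        funext y
        rw [hIH y, hW0 y, hW1 y, hWg y]
        exact darb_div_helper _ _ _ (hne0d y) (hne1d y)
      rw [hfun]
      rw [(hdg.fun_div hd1 (by rw [← hW1 x]; exact hne1 x)).deriv]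
      have J : (Matrix.of fun i j : Fin (k+2) => iteratedDeriv (i : ℕ) (v j) x).det *
            (Matrix.of fun i j : Fin k => iteratedDeriv (i : ℕ) (v j) x).det =
          (Matrix.of fun i j : Fin (k+1) => iteratedDeriv (i : ℕ) (v j) x).det *
            (Matrix.of fun i j : Fin (k+1) =>
              iteratedDeriv (jrow k i) (v (jrow k j)) x).det -
          (Matrix.of fun i j : Fin (k+1) => iteratedDeriv (jrow k i) (v j) x).det *
            (Matrix.of fun i j : Fin (k+1) => iteratedDeriv (i : ℕ) (v (jrow k j)) x).det :=
        jacobi (fun m j => iteratedDeriv m (v j) x) (by rw [← hW0 x]; exact hne0 x)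
      rw [hW1 x, hW0 x, hW2 x]
      exact darb_alg _ _ _ _ _ _ (hne0d x) (hne1d x) J
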